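/- arXiv:1608.03135 — 4 statements merged into one kernel-verified Lean document; each statement's English description precedes it below -/
import Mathlib

section
/- Let X and Y be objects of C. Fix a torsion decomposition ΓX → X → LX → ΓX⟦1⟧ of X (so ΓX ∈ T, LX ∈ T^⊥) and a completion decomposition ΔY → Y → ΛY → ΔY⟦1⟧ of Y (so ΔY ∈ T^⊥, ΛY ∈ T^⊥⊥). Then precomposition with the morphism ΓX → X induces a bijection Hom(X, ΛY) ≅ Hom(ΓX, ΛY), postcomposition with the morphism Y → ΛY induces a bijection Hom(ΓX, Y) ≅ Hom(ΓX, ΛY), and consequently there is a bijection Hom(ΓX, Y) ≅ Hom(X, ΛY). (Abstract local duality: the torsion functor Γ is left adjoint to the completion functor Λ; Theorem 2.5(4) of the paper, stated objectwise.) -/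
open CategoryTheory CategoryTheory.Limits CategoryTheory.Pretriangulated

universe v u

variable {C : Type u} [Category.{v} C] [HasZeroObject C] [HasShift C ℤ]
  [Preadditive C] [∀ n : ℤ, (shiftFunctor C n).Additive] [Pretriangulated C]

/-- The orthogonal `T^⊥` of a class of objects `T`: all objects `Y` such that every
morphism `X⟦n⟧ ⟶ Y` with `X ∈ T` is zero. -/
def orth (T : Set C) : Set C :=
  {Y | ∀ X ∈ T, ∀ n : ℤ, ∀ f : X⟦n⟧ ⟶ Y, f = 0}

/-- A triangulated subcategory of `C`, given as a class of objects containing the zero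
objects, closed under isomorphism, shifts, and extensions. -/
structure TriangulatedSub (C : Type u) [Category.{v} C] [HasZeroObject C] [HasShift C ℤ]
    [Preadditive C] [∀ n : ℤ, (shiftFunctor C n).Additive] [Pretriangulated C] where
  P : Set C
  zero_mem : ∀ X : C, IsZero X → X ∈ P
  iso_closed : ∀ ⦃X Y : C⦄, (X ≅ Y) → X ∈ P → Y ∈ P
  shift_closed : ∀ (X : C) (n : ℤ), X ∈ P → X⟦n⟧ ∈ P
  ext_closed : ∀ (Tr : Triangle C), (Tr ∈ distTriang C) → Tr.obj₁ ∈ P → Tr.obj₃ ∈ P → Tr.obj₂ ∈ P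


/-- A morphism from an object of `P` to an object of `orth P` is zero. -/
lemma hom_zero_of_orth {P : Set C} {Z W : C} (hZ : Z ∈ P) (hW : W ∈ orth P)
    (k : Z ⟶ W) : k = 0 := by
  have h0 : (shiftFunctorZero C ℤ).hom.app Z ≫ k = 0 := hW Z hZ 0 _
  have : k = (shiftFunctorZero C ℤ).inv.app Z ≫ (shiftFunctorZero C ℤ).hom.app Z ≫ k := by
    simp
  rw [this, h0, comp_zero]

/-- A morphism from an object of `P` to the `1`-shift of an object of `orth P` is zero. -/
lemma hom_zero_of_orth_shift {P : Set C} {Z W : C} (hZ : Z ∈ P) (hW : W ∈ orth P)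
    (k : Z ⟶ W⟦(1 : ℤ)⟧) : k = 0 := by
  have h0 : (shiftFunctor C (-1 : ℤ)).map k ≫
      (shiftFunctorCompIsoId C (1 : ℤ) (-1 : ℤ) (by omega)).hom.app W = 0 :=
    hW Z hZ (-1) _
  have h1 : (shiftFunctor C (-1 : ℤ)).map k = 0 := by
    have := h0 =≫ (shiftFunctorCompIsoId C (1 : ℤ) (-1 : ℤ) (by omega)).inv.app W
    simpa using this
  rwa [Functor.map_eq_zero_iff] at h1

/-- Abstract local duality (objectwise): given a torsion decomposition of `X` and a
completion decomposition of `Y`, precomposition with `ΓX ⟶ X` and postcomposition with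
`Y ⟶ ΛY` are bijections, and hence `Hom(ΓX, Y) ≅ Hom(X, ΛY)`. -/
theorem gamma_lambda_adjunction (T : TriangulatedSub C) (X Y : C)
    (ΓX LX : C) (a : ΓX ⟶ X) (b : X ⟶ LX) (c : LX ⟶ ΓX⟦(1 : ℤ)⟧)
    (hXdt : Triangle.mk a b c ∈ distTriang C) (hΓ : ΓX ∈ T.P) (hL : LX ∈ orth T.P)
    (ΔY ΛY : C) (d : ΔY ⟶ Y) (e : Y ⟶ ΛY) (f : ΛY ⟶ ΔY⟦(1 : ℤ)⟧)
    (hYdt : Triangle.mk d e f ∈ distTriang C) (hΔ : ΔY ∈ orth T.P)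
    (hΛ : ΛY ∈ orth (orth T.P)) :
    Function.Bijective (fun g : X ⟶ ΛY => a ≫ g) ∧
    Function.Bijective (fun g : ΓX ⟶ Y => g ≫ e) ∧
    Nonempty ((ΓX ⟶ Y) ≃ (X ⟶ ΛY)) := by

  have bij1 : Function.Bijective (fun g : X ⟶ ΛY => a ≫ g) := by
    constructor
    · intro g₁ g₂ hg
      have h0 : a ≫ (g₁ - g₂) = 0 := by
        simp only at hg
        simp [Preadditive.comp_sub, hg]
      obtain ⟨k, hk⟩ := Triangle.yoneda_exact₂ _ hXdt (g₁ - g₂) h0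
      have hk0 : k = 0 := hom_zero_of_orth hL hΛ k
      rw [hk0, comp_zero] at hk
      exact sub_eq_zero.mp hk
    · intro h
      obtain ⟨g, hg⟩ := Triangle.yoneda_exact₂ _ (inv_rot_of_distTriang _ hXdt) h
        (hΛ LX hL (-1) _)
      exact ⟨g, hg.symm⟩
  have bij2 : Function.Bijective (fun g : ΓX ⟶ Y => g ≫ e) := by
    constructor
    · intro g₁ g₂ hg
      have h0 : (g₁ - g₂) ≫ e = 0 := by
        simp only at hg
        simp [Preadditive.sub_comp, hg]
      obtain ⟨k, hk⟩ := Triangle.coyoneda_exact₂ _ hYdt (g₁ - g₂) h0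
      have hk0 : k = 0 := hom_zero_of_orth hΓ hΔ k
      rw [hk0, zero_comp] at hk
      exact sub_eq_zero.mp hk
    · intro h
      obtain ⟨g, hg⟩ := Triangle.coyoneda_exact₃ _ hYdt h
        (hom_zero_of_orth_shift hΓ hΔ _)
      exact ⟨g, hg.symm⟩
  exact ⟨bij1, bij2, ⟨(Equiv.ofBijective _ bij2).trans (Equiv.ofBijective _ bij1).symm⟩⟩
end

section
/- Let X and Y be objects of C. Fix a torsion decomposition ΓX → X → LX → ΓX⟦1⟧ of X and a completion decomposition ΔY → Y → ΛY → ΔY⟦1⟧ of Y. Then postcomposition with the morphism ΔY → Y induces a bijection Hom(LX, ΔY) ≅ Hom(LX, Y), precomposition with the morphism X → LX induces a bijection Hom(LX, ΔY) ≅ Hom(X, ΔY), and consequently there is a bijection Hom(LX, Y) ≅ Hom(X, ΔY). (The localization functor L is left adjoint to the colocalization functor Δ; Theorem 2.5(4) of the paper, second half, stated objectwise.) -/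
open CategoryTheory CategoryTheory.Limits CategoryTheory.Pretriangulated

universe v u

variable {C : Type u} [Category.{v} C] [HasZeroObject C] [HasShift C ℤ]
  [Preadditive C] [∀ n : ℤ, (shiftFunctor C n).Additive] [Pretriangulated C]

/-- A map whose source is in the class witnessing the orthogonality is zero. -/
lemma orth_hom_zero {S : Set C} {A B : C} (hA : A ∈ S) (hB : B ∈ orth S)
    (g : A ⟶ B) : g = 0 := by
  have h := hB A hA 0 ((shiftFunctorZero C ℤ).hom.app A ≫ g)
  have : (shiftFunctorZero C ℤ).inv.app A ≫ (shiftFunctorZero C ℤ).hom.app A ≫ g =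
      (shiftFunctorZero C ℤ).inv.app A ≫ 0 := by rw [h]
  simpa using this

/-- A map into a negative shift of an object in the orthogonal is zero. -/
lemma orth_hom_shift_neg_one_zero {S : Set C} {A B : C} (hA : A ∈ S) (hB : B ∈ orth S)
    (g : A ⟶ B⟦(-1 : ℤ)⟧) : g = 0 := by
  have h : (g⟦(1 : ℤ)⟧' ≫ (shiftFunctorCompIsoId C (-1) 1 (by norm_num)).hom.app B) = 0 :=
    hB A hA 1 _
  have h2 : g⟦(1 : ℤ)⟧' = 0 := by
    rw [← cancel_mono ((shiftFunctorCompIsoId C (-1) 1 (by norm_num)).hom.app B)]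
    simpa using h
  apply (shiftFunctor C (1 : ℤ)).map_injective
  rw [h2, Functor.map_zero]

/-- The localization functor `L` is left adjoint to the colocalization functor `Δ`
(objectwise): given a torsion decomposition of `X` and a completion decomposition of `Y`,
postcomposition with `ΔY ⟶ Y` and precomposition with `X ⟶ LX` are bijections, and hence
`Hom(LX, Y) ≅ Hom(X, ΔY)`. -/
theorem l_delta_adjunction (T : TriangulatedSub C) (X Y : C)
    (ΓX LX : C) (a : ΓX ⟶ X) (b : X ⟶ LX) (c : LX ⟶ ΓX⟦(1 : ℤ)⟧)
    (hXdt : Triangle.mk a b c ∈ distTriang C) (hΓ : ΓX ∈ T.P) (hL : LX ∈ orth T.P)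
    (ΔY ΛY : C) (d : ΔY ⟶ Y) (e : Y ⟶ ΛY) (f : ΛY ⟶ ΔY⟦(1 : ℤ)⟧)
    (hYdt : Triangle.mk d e f ∈ distTriang C) (hΔ : ΔY ∈ orth T.P)
    (hΛ : ΛY ∈ orth (orth T.P)) :
    Function.Bijective (fun g : LX ⟶ ΔY => g ≫ d) ∧
    Function.Bijective (fun g : LX ⟶ ΔY => b ≫ g) ∧
    Nonempty ((LX ⟶ Y) ≃ (X ⟶ ΔY)) := by

  have hpost : Function.Bijective (fun g : LX ⟶ ΔY => g ≫ d) := by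
    constructor
    · intro g₁ g₂ hg
      simp only at hg
      have hz : (g₁ - g₂) ≫ d = 0 := by rw [Preadditive.sub_comp, hg, sub_self]
      obtain ⟨h, hh⟩ := Triangle.coyoneda_exact₂ _ (inv_rot_of_distTriang _ hYdt) (g₁ - g₂) hz
      have : h = 0 := orth_hom_shift_neg_one_zero hL hΛ h
      rw [this, zero_comp] at hh
      exact sub_eq_zero.mp hh
    · intro k
      have hz : k ≫ e = 0 := orth_hom_zero hL hΛ (k ≫ e)
      obtain ⟨g, hg⟩ := Triangle.coyoneda_exact₂ _ hYdt k hz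
      exact ⟨g, hg.symm⟩
  have hpre : Function.Bijective (fun g : LX ⟶ ΔY => b ≫ g) := by
    constructor
    · intro g₁ g₂ hg
      simp only at hg
      have hz : b ≫ (g₁ - g₂) = 0 := by rw [Preadditive.comp_sub, hg, sub_self]
      obtain ⟨h, hh⟩ := Triangle.yoneda_exact₃ _ hXdt (g₁ - g₂) hz
      have : h = 0 := hΔ ΓX hΓ 1 h
      rw [this, comp_zero] at hh
      exact sub_eq_zero.mp hh
    · intro k
      have hz : a ≫ k = 0 := orth_hom_zero hΓ hΔ (a ≫ k)
      obtain ⟨g, hg⟩ := Triangle.yoneda_exact₂ _ hXdt k hz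
      exact ⟨g, hg.symm⟩
  exact ⟨hpost, hpre, ⟨(Equiv.ofBijective _ hpost).symm.trans (Equiv.ofBijective _ hpre)⟩⟩
end

section
/- Γ and Λ restrict to mutually inverse equivalences between T and T^⊥⊥ (Theorem 2.5(3) of the paper, stated objectwise): (i) Suppose X ∈ T, let ΔX → X → ΛX → ΔX⟦1⟧ be a completion decomposition of X, and let Γ' → ΛX → L' → Γ'⟦1⟧ be a torsion decomposition of ΛX. Then the morphism X → ΛX factors uniquely through the morphism Γ' → ΛX, and the resulting morphism X → Γ' is an isomorphism. (ii) Suppose Y ∈ T^⊥⊥, let ΓY → Y → LY → ΓY⟦1⟧ be a torsion decomposition of Y, and let Δ' → ΓY → Λ' → Δ'⟦1⟧ be a completion decomposition of ΓY. Then there is a unique morphism Λ' → Y whose composite with ΓY → Λ' equals the morphism ΓY → Y, and this morphism Λ' → Y is an isomorphism. -/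
open CategoryTheory CategoryTheory.Limits CategoryTheory.Pretriangulated

universe v u

variable {C : Type u} [Category.{v} C] [HasZeroObject C] [HasShift C ℤ]
  [Preadditive C] [∀ n : ℤ, (shiftFunctor C n).Additive] [Pretriangulated C]

/-
For `X ∈ T`, both `e : X ⟶ ΛX` and `g : Γ' ⟶ ΛX` induce bijections on `Hom(W, -)` for every
`W ∈ T`: in the triangles through them (the second one rotated) the first vertex, `ΔX` resp.
`L'⟦-1⟧`, lies in `T^⊥` together with all its shifts. Since `X` and `Γ'` lie in `T`, the Yoneda
argument restricted to `T` produces a unique factorization `X ⟶ Γ'` and shows it is invertible.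
Part (ii) is dual: `e'` and `a` induce bijections on `Hom(-, Z)` for every `Z ∈ T^⊥⊥`.
-/

section Orthogonal

variable {D : Type*} [Category D] [HasShift D ℤ] [Preadditive D]

lemma eq_zero_of_mem_orth {S : Set D} {X Y : D} (hX : X ∈ S) (hY : Y ∈ orth S) (f : X ⟶ Y) :
    f = 0 := by
  rw [← cancel_epi ((shiftFunctorZero D ℤ).hom.app X), comp_zero]
  exact hY X hX 0 _

lemma shift_mem_orth {S : Set D} {Y : D} (hY : Y ∈ orth S) (m : ℤ) : Y⟦m⟧ ∈ orth S := by
  intro X hX n f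
  have hf : (shiftFunctorAdd' D n (-m) (n + -m) rfl).hom.app X ≫ (shiftFunctor D (-m)).map f ≫
      (shiftFunctorCompIsoId D m (-m) (by omega)).hom.app Y = 0 :=
    hY X hX (n + -m) _
  apply (shiftFunctor D (-m)).map_injective
  rw [Functor.map_zero, ← cancel_epi ((shiftFunctorAdd' D n (-m) (n + -m) rfl).hom.app X),
    ← cancel_mono ((shiftFunctorCompIsoId D m (-m) (by omega)).hom.app Y)]
  simpa using hf

end Orthogonal

lemma bijective_comp_mor₂_of_mem_orth {S : Set C} {W : C} (hW : W ∈ S) (Tr : Triangle C)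
    (hTr : Tr ∈ distTriang C) (h₁ : Tr.obj₁ ∈ orth S) :
    Function.Bijective (fun s : W ⟶ Tr.obj₂ => s ≫ Tr.mor₂) := by
  refine ⟨(injective_iff_map_eq_zero (Preadditive.rightComp W Tr.mor₂)).2 fun s hs => ?_,
    fun t => ?_⟩
  · obtain ⟨w, rfl⟩ := Triangle.coyoneda_exact₂ Tr hTr s hs
    rw [eq_zero_of_mem_orth hW h₁ w, zero_comp]
  · obtain ⟨s, rfl⟩ := Triangle.coyoneda_exact₃ Tr hTr t
      (eq_zero_of_mem_orth hW (shift_mem_orth h₁ 1) _)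
    exact ⟨s, rfl⟩

lemma bijective_mor₂_comp_of_mem_orth {S : Set C} {Z : C} (hZ : Z ∈ orth S) (Tr : Triangle C)
    (hTr : Tr ∈ distTriang C) (h₁ : Tr.obj₁ ∈ S) :
    Function.Bijective (fun s : Tr.obj₃ ⟶ Z => Tr.mor₂ ≫ s) := by
  refine ⟨(injective_iff_map_eq_zero (Preadditive.leftComp Z Tr.mor₂)).2 fun s hs => ?_,
    fun t => ?_⟩
  · obtain ⟨w, rfl⟩ := Triangle.yoneda_exact₃ Tr hTr s hs
    rw [hZ _ h₁ 1 w, comp_zero]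
  · obtain ⟨s, rfl⟩ := Triangle.yoneda_exact₂ Tr hTr t (eq_zero_of_mem_orth h₁ hZ _)
    exact ⟨s, rfl⟩

section RestrictedYoneda

variable {D : Type*} [Category D]

lemma existsUnique_isIso_lift (S : Set D) {X G Z : D} (hX : X ∈ S) (hG : G ∈ S)
    (g : G ⟶ Z) (e : X ⟶ Z) (hg : ∀ W ∈ S, Function.Bijective (fun s : W ⟶ G => s ≫ g))
    (he : ∀ W ∈ S, Function.Bijective (fun s : W ⟶ X => s ≫ e)) :
    (∃! u : X ⟶ G, u ≫ g = e) ∧ ∀ u : X ⟶ G, u ≫ g = e → IsIso u := by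
  obtain ⟨u₀, hu₀ : u₀ ≫ g = e⟩ := (hg X hX).surjective e
  refine ⟨⟨u₀, hu₀, fun u hu => (hg X hX).injective (hu.trans hu₀.symm)⟩, fun u hu => ?_⟩
  obtain ⟨v, hv : v ≫ e = g⟩ := (he G hG).surjective g
  refine ⟨v, (he X hX).injective ?_, (hg G hG).injective ?_⟩
  · simp only [Category.assoc, hv, hu, Category.id_comp]
  · simp only [Category.assoc, hu, hv, Category.id_comp]

lemma existsUnique_isIso_desc (S : Set D) {Y L Z : D} (hY : Y ∈ S) (hL : L ∈ S)
    (e : Z ⟶ L) (a : Z ⟶ Y) (he : ∀ W ∈ S, Function.Bijective (fun s : L ⟶ W => e ≫ s))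
    (ha : ∀ W ∈ S, Function.Bijective (fun s : Y ⟶ W => a ≫ s)) :
    (∃! v : L ⟶ Y, e ≫ v = a) ∧ ∀ v : L ⟶ Y, e ≫ v = a → IsIso v := by
  obtain ⟨v₀, hv₀ : e ≫ v₀ = a⟩ := (he Y hY).surjective a
  refine ⟨⟨v₀, hv₀, fun v hv => (he Y hY).injective (hv.trans hv₀.symm)⟩, fun v hv => ?_⟩
  obtain ⟨w, hw : a ≫ w = e⟩ := (ha L hL).surjective e
  refine ⟨w, (he L hL).injective ?_, (ha Y hY).injective ?_⟩
  · simp only [← Category.assoc, hv, hw, Category.comp_id]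
  · simp only [← Category.assoc, hw, hv, Category.comp_id]

end RestrictedYoneda

theorem gamma_lambda_equivalence_general (T : TriangulatedSub C)
    -- (i): data for `X ∈ T`
    (X : C) (hX : X ∈ T.P)
    (ΔX ΛX : C) (d : ΔX ⟶ X) (e : X ⟶ ΛX) (f : ΛX ⟶ ΔX⟦(1 : ℤ)⟧)
    (hXdt : Triangle.mk d e f ∈ distTriang C) (hΔX : ΔX ∈ orth T.P)
    (Γ' L' : C) (g : Γ' ⟶ ΛX) (h : ΛX ⟶ L') (k : L' ⟶ Γ'⟦(1 : ℤ)⟧)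
    (hΛdt : Triangle.mk g h k ∈ distTriang C) (hΓ' : Γ' ∈ T.P) (hL' : L' ∈ orth T.P)
    -- (ii): data for `Y ∈ T^⊥⊥`
    (Y : C) (hY : Y ∈ orth (orth T.P))
    (ΓY LY : C) (a : ΓY ⟶ Y) (b : Y ⟶ LY) (c : LY ⟶ ΓY⟦(1 : ℤ)⟧)
    (hYdt : Triangle.mk a b c ∈ distTriang C) (hLY : LY ∈ orth T.P)
    (Δ' Λ' : C) (d' : Δ' ⟶ ΓY) (e' : ΓY ⟶ Λ') (f' : Λ' ⟶ Δ'⟦(1 : ℤ)⟧)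
    (hΓdt : Triangle.mk d' e' f' ∈ distTriang C) (hΔ' : Δ' ∈ orth T.P)
    (hΛ' : Λ' ∈ orth (orth T.P)) :
    ((∃! u : X ⟶ Γ', u ≫ g = e) ∧ (∀ u : X ⟶ Γ', u ≫ g = e → IsIso u)) ∧
    ((∃! v : Λ' ⟶ Y, e' ≫ v = a) ∧ (∀ v : Λ' ⟶ Y, e' ≫ v = a → IsIso v)) :=
  ⟨existsUnique_isIso_lift T.P hX hΓ' g e
      (fun _ hW => bijective_comp_mor₂_of_mem_orth hW _ (inv_rot_of_distTriang _ hΛdt)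
        (shift_mem_orth hL' (-1)))
      (fun _ hW => bijective_comp_mor₂_of_mem_orth hW _ hXdt hΔX),
    existsUnique_isIso_desc (orth (orth T.P)) hY hΛ' e' a
      (fun _ hZ => bijective_mor₂_comp_of_mem_orth hZ _ hΓdt hΔ')
      (fun _ hZ => bijective_mor₂_comp_of_mem_orth hZ _ (inv_rot_of_distTriang _ hYdt)
        (shift_mem_orth hLY (-1)))⟩

/-- `Γ` and `Λ` restrict to mutually inverse equivalences between `T` and `T^⊥⊥`
(objectwise): (i) for `X ∈ T`, the map `X ⟶ ΛX` factors uniquely through the torsion part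
`Γ'` of `ΛX`, and the factorization `X ⟶ Γ'` is an isomorphism; (ii) for `Y ∈ T^⊥⊥`, the
map `ΓY ⟶ Y` factors uniquely through the completion `Λ'` of `ΓY`, and the factorization
`Λ' ⟶ Y` is an isomorphism. -/
theorem gamma_lambda_equivalence (T : TriangulatedSub C)
    -- (i): data for `X ∈ T`
    (X : C) (hX : X ∈ T.P)
    (ΔX ΛX : C) (d : ΔX ⟶ X) (e : X ⟶ ΛX) (f : ΛX ⟶ ΔX⟦(1 : ℤ)⟧)
    (hXdt : Triangle.mk d e f ∈ distTriang C) (hΔX : ΔX ∈ orth T.P)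
    (hΛX : ΛX ∈ orth (orth T.P))
    (Γ' L' : C) (g : Γ' ⟶ ΛX) (h : ΛX ⟶ L') (k : L' ⟶ Γ'⟦(1 : ℤ)⟧)
    (hΛdt : Triangle.mk g h k ∈ distTriang C) (hΓ' : Γ' ∈ T.P) (hL' : L' ∈ orth T.P)
    -- (ii): data for `Y ∈ T^⊥⊥`
    (Y : C) (hY : Y ∈ orth (orth T.P))
    (ΓY LY : C) (a : ΓY ⟶ Y) (b : Y ⟶ LY) (c : LY ⟶ ΓY⟦(1 : ℤ)⟧)
    (hYdt : Triangle.mk a b c ∈ distTriang C) (hΓY : ΓY ∈ T.P) (hLY : LY ∈ orth T.P)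
    (Δ' Λ' : C) (d' : Δ' ⟶ ΓY) (e' : ΓY ⟶ Λ') (f' : Λ' ⟶ Δ'⟦(1 : ℤ)⟧)
    (hΓdt : Triangle.mk d' e' f' ∈ distTriang C) (hΔ' : Δ' ∈ orth T.P)
    (hΛ' : Λ' ∈ orth (orth T.P)) :
    ((∃! u : X ⟶ Γ', u ≫ g = e) ∧ (∀ u : X ⟶ Γ', u ≫ g = e → IsIso u)) ∧
    ((∃! v : Λ' ⟶ Y, e' ≫ v = a) ∧ (∀ v : Λ' ⟶ Y, e' ≫ v = a → IsIso v)) :=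
  gamma_lambda_equivalence_general T X hX ΔX ΛX d e f hXdt hΔX Γ' L' g h k hΛdt hΓ' hL' Y hY ΓY LY a
    b c hYdt hLY Δ' Λ' d' e' f' hΓdt hΔ' hΛ'
end

section
/- ΛΓ ≃ Λ and ΓΛ ≃ Γ (Theorem 2.5(3) of the paper, second half, stated objectwise): let X be an object of C with a torsion decomposition ΓX → X → LX → ΓX⟦1⟧ and a completion decomposition ΔX → X → ΛX → ΔX⟦1⟧. (i) Given a completion decomposition Δ' → ΓX → Λ' → Δ'⟦1⟧ of ΓX, there is a unique morphism Λ' → ΛX whose precomposition with ΓX → Λ' equals the composite ΓX → X → ΛX, and this morphism is an isomorphism. (ii) Given a torsion decomposition Γ'' → ΛX → L'' → Γ''⟦1⟧ of ΛX, there is a unique morphism ΓX → Γ'' whose postcomposition with Γ'' → ΛX equals the composite ΓX → X → ΛX, and this morphism is an isomorphism. -/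
/-!
The arrow `e : X ⟶ ΛX` of a completion decomposition is local for `T^⊥⊥` (every map from `X`
to an object of `T^⊥⊥` factors uniquely through it), and so is `a : ΓX ⟶ X`, because its cone
`LX` lies in `T^⊥`. Hence `e'` and `a ≫ e` are two `T^⊥⊥`-local arrows out of `ΓX` with targets
in `T^⊥⊥`, so they are canonically isomorphic. Dually, `a`, `e` and `g : Γ'' ⟶ ΛX` are colocal
for `T` (maps from objects of `T` lift uniquely along them), so `a ≫ e` and `g` are two
`T`-colocal arrows into `ΛX` with sources in `T`.
-/

open CategoryTheory CategoryTheory.Limits CategoryTheory.Pretriangulated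

universe v u

variable {C : Type u} [Category.{v} C] [HasZeroObject C] [HasShift C ℤ]
  [Preadditive C] [∀ n : ℤ, (shiftFunctor C n).Additive] [Pretriangulated C]

section Orthogonal

variable {S : Set C} {A B : C}

omit [HasZeroObject C] [∀ n : ℤ, (shiftFunctor C n).Additive] [Pretriangulated C] in
lemma eq_zero_of_mem_orth_s4 (hA : A ∈ S) (hB : B ∈ orth S) (f : A ⟶ B) : f = 0 :=
  (cancel_epi ((shiftFunctorZero C ℤ).hom.app A)).1
    (by rw [hB A hA 0 (_ ≫ f), comp_zero])

omit [HasZeroObject C] [Pretriangulated C] in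
lemma eq_zero_of_mem_orth_shift (hA : A ∈ S) (hB : B ∈ orth S) (n : ℤ) (f : A ⟶ B⟦n⟧) :
    f = 0 := by
  let ε := (shiftFunctorCompIsoId C n (-n) (by omega)).hom.app B
  have hf : (shiftFunctor C (-n)).map f = 0 :=
    (cancel_mono ε).1 (by rw [hB A hA (-n) (_ ≫ ε), zero_comp])
  exact (shiftFunctor C (-n)).map_injective (by rw [hf, Functor.map_zero])

end Orthogonal

section Triangles

variable {S : Set C} {Tr : Triangle C}

lemma isLocal_orth_mor₂ (hTr : Tr ∈ distTriang C) (h₁ : Tr.obj₁ ∈ S) :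
    ObjectProperty.isLocal (· ∈ orth S) Tr.mor₂ := by
  intro Z hZ
  constructor
  · intro φ ψ hφψ
    obtain ⟨w, hw⟩ := Triangle.yoneda_exact₃ Tr hTr (φ - ψ)
      (by simpa [Preadditive.comp_sub, sub_eq_zero])
    rw [hZ _ h₁ 1 w, comp_zero] at hw
    exact sub_eq_zero.1 hw
  · intro φ
    obtain ⟨ψ, hψ⟩ := Triangle.yoneda_exact₂ Tr hTr φ (eq_zero_of_mem_orth_s4 h₁ hZ _)
    exact ⟨ψ, hψ.symm⟩

lemma isLocal_orth_mor₁ (hTr : Tr ∈ distTriang C) (h₃ : Tr.obj₃ ∈ S) :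
    ObjectProperty.isLocal (· ∈ orth S) Tr.mor₁ := by
  intro Z hZ
  constructor
  · intro φ ψ hφψ
    obtain ⟨w, hw⟩ := Triangle.yoneda_exact₂ Tr hTr (φ - ψ)
      (by simpa [Preadditive.comp_sub, sub_eq_zero])
    rw [eq_zero_of_mem_orth_s4 h₃ hZ w, comp_zero] at hw
    exact sub_eq_zero.1 hw
  · intro φ
    obtain ⟨ψ, hψ⟩ := Triangle.yoneda_exact₂ _ (inv_rot_of_distTriang Tr hTr) φ (hZ _ h₃ (-1) _)
    exact ⟨ψ, hψ.symm⟩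

lemma isColocal_mor₁_of_mem_orth (hTr : Tr ∈ distTriang C) (h₃ : Tr.obj₃ ∈ orth S) :
    ObjectProperty.isColocal (· ∈ S) Tr.mor₁ := by
  intro Z hZ
  constructor
  · intro φ ψ hφψ
    obtain ⟨w, hw⟩ := Triangle.coyoneda_exact₂ _ (inv_rot_of_distTriang Tr hTr) (φ - ψ)
      (show (φ - ψ) ≫ Tr.mor₁ = 0 by simpa [Preadditive.sub_comp, sub_eq_zero])
    have hw₀ : w = 0 := eq_zero_of_mem_orth_shift hZ h₃ (-1) w
    rw [hw₀, zero_comp] at hw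
    exact sub_eq_zero.1 hw
  · intro φ
    obtain ⟨ψ, hψ⟩ := Triangle.coyoneda_exact₂ Tr hTr φ (eq_zero_of_mem_orth_s4 hZ h₃ _)
    exact ⟨ψ, hψ.symm⟩

lemma isColocal_mor₂_of_mem_orth (hTr : Tr ∈ distTriang C) (h₁ : Tr.obj₁ ∈ orth S) :
    ObjectProperty.isColocal (· ∈ S) Tr.mor₂ := by
  intro Z hZ
  constructor
  · intro φ ψ hφψ
    obtain ⟨w, hw⟩ := Triangle.coyoneda_exact₂ Tr hTr (φ - ψ)
      (by simpa [Preadditive.sub_comp, sub_eq_zero])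
    rw [eq_zero_of_mem_orth_s4 hZ h₁ w, zero_comp] at hw
    exact sub_eq_zero.1 hw
  · intro φ
    obtain ⟨ψ, hψ⟩ := Triangle.coyoneda_exact₃ Tr hTr φ (eq_zero_of_mem_orth_shift hZ h₁ 1 _)
    exact ⟨ψ, hψ.symm⟩

end Triangles

open ObjectProperty MorphismProperty in
/-- `ΛΓ ≃ Λ` and `ΓΛ ≃ Γ` (objectwise): given torsion and completion decompositions of `X`,
(i) the completion `Λ'` of `ΓX` maps uniquely and isomorphically to `ΛX` compatibly with
the composite `ΓX ⟶ X ⟶ ΛX`; (ii) `ΓX` maps uniquely and isomorphically to the torsion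
part `Γ''` of `ΛX` compatibly with the same composite. -/
theorem lambda_gamma_iso (T : TriangulatedSub C) (X : C)
    (ΓX LX : C) (a : ΓX ⟶ X) (b : X ⟶ LX) (c : LX ⟶ ΓX⟦(1 : ℤ)⟧)
    (hXdt : Triangle.mk a b c ∈ distTriang C) (hΓ : ΓX ∈ T.P) (hL : LX ∈ orth T.P)
    (ΔX ΛX : C) (d : ΔX ⟶ X) (e : X ⟶ ΛX) (f : ΛX ⟶ ΔX⟦(1 : ℤ)⟧)
    (hXdt' : Triangle.mk d e f ∈ distTriang C) (hΔ : ΔX ∈ orth T.P)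
    (hΛ : ΛX ∈ orth (orth T.P))
    -- (i): a completion decomposition of `ΓX`
    (Δ' Λ' : C) (d' : Δ' ⟶ ΓX) (e' : ΓX ⟶ Λ') (f' : Λ' ⟶ Δ'⟦(1 : ℤ)⟧)
    (hΓdt : Triangle.mk d' e' f' ∈ distTriang C) (hΔ' : Δ' ∈ orth T.P)
    (hΛ' : Λ' ∈ orth (orth T.P))
    -- (ii): a torsion decomposition of `ΛX`
    (Γ'' L'' : C) (g : Γ'' ⟶ ΛX) (h : ΛX ⟶ L'') (k : L'' ⟶ Γ''⟦(1 : ℤ)⟧)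
    (hΛdt : Triangle.mk g h k ∈ distTriang C) (hΓ'' : Γ'' ∈ T.P) (hL'' : L'' ∈ orth T.P) :
    ((∃! m : Λ' ⟶ ΛX, e' ≫ m = a ≫ e) ∧ (∀ m : Λ' ⟶ ΛX, e' ≫ m = a ≫ e → IsIso m)) ∧
    ((∃! m' : ΓX ⟶ Γ'', m' ≫ g = a ≫ e) ∧ (∀ m' : ΓX ⟶ Γ'', m' ≫ g = a ≫ e → IsIso m')) := by
  have hae_local : isLocal (· ∈ orth (orth T.P)) (a ≫ e) :=
    comp_mem _ _ _ (isLocal_orth_mor₁ hXdt hL) (isLocal_orth_mor₂ hXdt' hΔ)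
  have he'_local : isLocal (· ∈ orth (orth T.P)) e' := isLocal_orth_mor₂ hΓdt hΔ'
  have hae_colocal : isColocal (· ∈ T.P) (a ≫ e) :=
    comp_mem _ _ _ (isColocal_mor₁_of_mem_orth hXdt hL) (isColocal_mor₂_of_mem_orth hXdt' hΔ)
  have hg_colocal : isColocal (· ∈ T.P) g := isColocal_mor₁_of_mem_orth hΛdt hL''
  refine ⟨⟨(he'_local ΛX hΛ).existsUnique (a ≫ e), fun m hm => ?_⟩,
    ⟨(hg_colocal ΓX hΓ).existsUnique (a ≫ e), fun m' hm' => ?_⟩⟩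
  · rw [← hm] at hae_local
    exact (isLocal_iff_isIso _ m hΛ' hΛ).1 (of_precomp _ _ _ he'_local hae_local)
  · rw [← hm'] at hae_colocal
    exact (isColocal_iff_isIso _ m' hΓ hΓ'').1 (of_postcomp _ _ _ hg_colocal hae_colocal)
end
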